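/- arXiv:2403.18528 — 2 statements merged into one kernel-verified Lean document; each statement's English description precedes it below -/
import Mathlib

section
/- Let Σ be a symmetric positive definite n×n real matrix, m ∈ ℝⁿ, M = Σ + m·mᵀ, a > 0, q_T > 0, and let B = [[A, p], [pᵀ, q]] be a symmetric positive semidefinite (n+1)×(n+1) real matrix with top-left n×n block A, vector p ∈ ℝⁿ, and scalar q. Then q_T·a² + q − (p + q_T·a·m)ᵀ(A + q_T·M)⁻¹(p + q_T·a·m) > 0. (This is the strict positivity of the value coefficient h_{(T−1)+} in the proof of Theorem 1.) -/
open Matrix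

/-!
With `D = A + q_T M` and `v = p + q_T a m`, the quantity `q_T a² + q - vᵀ D⁻¹ v` is the value of
`x ↦ q_T a² + q + 2 v ⬝ x + xᵀ D x` at its critical point `x = -D⁻¹ v`. Since `M = S + m mᵀ`, that
quadratic regroups as `(x, 1)ᵀ B (x, 1) + q_T xᵀ S x + q_T (m ⬝ x + a)²`. The first term is
nonnegative because `B` is positive semidefinite, and the other two cannot both vanish:
`xᵀ S x > 0` unless `x = 0`, and then the last term is `q_T a² > 0`.
-/

namespace Matrix

variable {n R : Type*}

theorem PosSemidef.toBlocks₁₁ [Ring R] [PartialOrder R] [StarRing R] {m : Type*}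
    {M : Matrix (n ⊕ m) (n ⊕ m) R} (hM : M.PosSemidef) : M.toBlocks₁₁.PosSemidef :=
  hM.submatrix Sum.inl

variable [Fintype n]

theorem dotProduct_nonsing_inv_mulVec_self_eq [CommRing R] [DecidableEq n] {D : Matrix n n R}
    (hD : IsUnit D.det) {v x : n → R} (hx : D *ᵥ x = -v) :
    v ⬝ᵥ D⁻¹ *ᵥ v = -(x ⬝ᵥ D *ᵥ x + 2 * (v ⬝ᵥ x)) := by
  have hinv : D⁻¹ *ᵥ v = -x := by
    rw [← neg_neg v, ← hx, mulVec_neg, mulVec_mulVec, nonsing_inv_mul D hD, one_mulVec]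
  rw [hinv, hx, dotProduct_neg, dotProduct_neg, dotProduct_comm x v]
  ring

theorem dotProduct_vecMulVec_self_mulVec [CommSemiring R] (m x : n → R) :
    x ⬝ᵥ vecMulVec m m *ᵥ x = (m ⬝ᵥ x) ^ 2 := by
  rw [vecMulVec_mulVec, op_smul_eq_smul, dotProduct_smul, smul_eq_mul, dotProduct_comm, sq]

theorem sumElim_one_dotProduct_fromBlocks_replicate_mulVec [CommSemiring R]
    (A : Matrix n n R) (p : n → R) (q : R) (x : n → R) :
    Sum.elim x (fun _ : Unit => 1) ⬝ᵥ
        fromBlocks A (replicateCol Unit p) (replicateRow Unit p) (of fun _ _ => q) *ᵥ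
          Sum.elim x (fun _ => 1) =
      x ⬝ᵥ A *ᵥ x + 2 * (p ⬝ᵥ x) + q := by
  have hp : replicateCol Unit p *ᵥ (fun _ => 1) = p := by ext; simp [mulVec]
  simp only [fromBlocks_mulVec, Sum.elim_comp_inl, Sum.elim_comp_inr, sumElim_dotProduct_sumElim,
    replicateRow_mulVec_eq_const, hp, dotProduct_add, dotProduct_comm x p]
  simp only [dotProduct, mulVec, Finset.univ_unique, PUnit.default_eq_unit, Function.const_apply,
    one_mul, Finset.sum_const, Finset.card_singleton, one_smul, of_apply, mul_one]
  ring

namespace PosSemidef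

theorem fromBlocks_replicate_dotProduct_mulVec_nonneg [CommRing R] [PartialOrder R] [StarRing R]
    [TrivialStar R] {A : Matrix n n R} {p : n → R} {q : R}
    (hB : (fromBlocks A (replicateCol Unit p) (replicateRow Unit p) (of fun _ _ => q)).PosSemidef)
    (x : n → R) : 0 ≤ x ⬝ᵥ A *ᵥ x + 2 * (p ⬝ᵥ x) + q := by
  simpa [star_trivial, sumElim_one_dotProduct_fromBlocks_replicate_mulVec] using
    hB.dotProduct_mulVec_nonneg (Sum.elim x fun _ => 1)

end PosSemidef

end Matrix

/-- Strict positivity of the value coefficient `h_{(T-1)+}` in the proof of Theorem 1: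
with `M = Σ + m mᵀ`, `a > 0`, `q_T > 0`, and `B = [[A, p], [pᵀ, q]]` positive semidefinite,
`q_T a² + q - (p + q_T a m)ᵀ (A + q_T M)⁻¹ (p + q_T a m) > 0`. -/
theorem stmt_1 {n : ℕ} (S : Matrix (Fin n) (Fin n) ℝ) (hS : S.PosDef)
    (m : Fin n → ℝ) (a qT : ℝ) (ha : 0 < a) (hqT : 0 < qT)
    (A : Matrix (Fin n) (Fin n) ℝ) (p : Fin n → ℝ) (q : ℝ)
    (hB : (Matrix.fromBlocks A (Matrix.replicateCol Unit p) (Matrix.replicateRow Unit p)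
        (Matrix.of fun _ _ => q)).PosSemidef) :
    0 < qT * a ^ 2 + q - (p + (qT * a) • m) ⬝ᵥ
      (A + qT • (S + Matrix.vecMulVec m m))⁻¹.mulVec (p + (qT * a) • m) := by
  set D := A + qT • (S + vecMulVec m m)
  have hA : A.PosSemidef := by simpa using hB.toBlocks₁₁
  have hmm : (vecMulVec m m).PosSemidef := by simpa using posSemidef_vecMulVec_self_star m
  have hD : D.PosDef := PosDef.posSemidef_add hA ((hS.add_posSemidef hmm).smul hqT)
  have hDdet : IsUnit D.det := (isUnit_iff_isUnit_det D).mp hD.isUnit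
  set x := -(D⁻¹ *ᵥ (p + (qT * a) • m))
  have hx : D *ᵥ x = -(p + (qT * a) • m) := by
    rw [mulVec_neg, mulVec_mulVec, mul_nonsing_inv D hDdet, one_mulVec]
  have hDx : x ⬝ᵥ D *ᵥ x = x ⬝ᵥ A *ᵥ x + qT * (x ⬝ᵥ S *ᵥ x) + qT * (m ⬝ᵥ x) ^ 2 := by
    simp only [D, add_mulVec, smul_mulVec, dotProduct_add, dotProduct_smul, smul_eq_mul,
      dotProduct_vecMulVec_self_mulVec]
    ring
  have hpos : 0 < x ⬝ᵥ S *ᵥ x + (m ⬝ᵥ x + a) ^ 2 := by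
    rcases eq_or_ne x 0 with hx0 | hx0
    · simp [hx0, ha]
    · simpa using add_pos_of_pos_of_nonneg (hS.dotProduct_mulVec_pos hx0) (sq_nonneg (m ⬝ᵥ x + a))
  rw [dotProduct_nonsing_inv_mulVec_self_eq hDdet hx, hDx, add_dotProduct, smul_dotProduct,
    smul_eq_mul]
  nlinarith [hB.fromBlocks_replicate_dotProduct_mulVec_nonneg x, mul_pos hqT hpos]
end

section
/- Let (Ω, F, P) be a probability space and b : Ω → ℝⁿ measurable with E[‖b‖²] < ∞. Set m = E[b] and let Σ = E[b bᵀ] − m·mᵀ be the covariance matrix of b. Assume Σ is positive definite and m ≠ 0. Let a > 0, x₀ ∈ ℝ, and d ∈ ℝ with d ≥ a·x₀, and for u ∈ ℝⁿ let x₁(u) = a·x₀ + bᵀu. Set h = a²·(1 − mᵀ(Σ + m·mᵀ)⁻¹m). Then 0 < h < a², and the minimum of Var(x₁(u)) over all u ∈ ℝⁿ satisfying E[x₁(u)] = d equals h·(d − a·x₀)²/(a² − h), attained at u⋆ = Σ⁻¹m·(d − a·x₀)/(mᵀΣ⁻¹m). (This is the single-period case of the mean-variance efficient frontier of Theorem 2.)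 -/
/-!
Writing the terminal wealth as `a x₀ + bᵀu`, its mean is `a x₀ + mᵀu` and its variance is the
quadratic form `uᵀΣu`. Cauchy–Schwarz for the inner product defined by `Σ` gives
`(mᵀu)² ≤ (mᵀΣ⁻¹m)(uᵀΣu)`, with equality along `Σ⁻¹m`, so under `mᵀu = d - a x₀` the minimal
variance is `(d - a x₀)² / α` with `α = mᵀΣ⁻¹m > 0`. By the Sherman–Morrison formula
`(Σ + mmᵀ)⁻¹m = Σ⁻¹m / (1 + α)`, hence `h = a² / (1 + α)` and `h / (a² - h) = 1 / α`.
-/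

open MeasureTheory ProbabilityTheory Matrix

namespace Matrix

lemma IsSymm.dotProduct_mulVec_comm {ι R : Type*} [Fintype ι] [CommSemiring R]
    {S : Matrix ι ι R} (hS : S.IsSymm) (x y : ι → R) :
    x ⬝ᵥ S *ᵥ y = y ⬝ᵥ S *ᵥ x := by
  rw [dotProduct_mulVec, ← mulVec_transpose, hS.eq, dotProduct_comm]

variable {ι : Type*} [Fintype ι] {S : Matrix ι ι ℝ}

lemma PosSemidef.sq_dotProduct_mulVec_le (hS : S.PosSemidef) (x y : ι → ℝ) :
    (x ⬝ᵥ S *ᵥ y) ^ 2 ≤ (x ⬝ᵥ S *ᵥ x) * (y ⬝ᵥ S *ᵥ y) := by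
  have hquad : ∀ t : ℝ,
      0 ≤ (y ⬝ᵥ S *ᵥ y) * (t * t) + 2 * (x ⬝ᵥ S *ᵥ y) * t + x ⬝ᵥ S *ᵥ x := by
    intro t
    have h := hS.dotProduct_mulVec_nonneg (x + t • y)
    rw [star_trivial, mulVec_add, mulVec_smul, dotProduct_add, add_dotProduct, add_dotProduct,
      dotProduct_smul, smul_dotProduct, smul_dotProduct, dotProduct_smul,
      (isHermitian_iff_isSymm.mp hS.1).dotProduct_mulVec_comm y x] at h
    simp only [smul_eq_mul] at h
    linarith
  have := discrim_le_zero hquad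
  rw [discrim] at this
  nlinarith

variable [DecidableEq ι]

lemma PosDef.mulVec_inv_mulVec (hS : S.PosDef) (m : ι → ℝ) : S *ᵥ S⁻¹ *ᵥ m = m := by
  rw [mulVec_mulVec, mul_nonsing_inv _ ((isUnit_iff_isUnit_det S).mp hS.isUnit), one_mulVec]

lemma PosDef.sq_dotProduct_div_le (hS : S.PosDef) (m u : ι → ℝ) :
    (m ⬝ᵥ u) ^ 2 / (m ⬝ᵥ S⁻¹ *ᵥ m) ≤ u ⬝ᵥ S *ᵥ u := by
  have h := hS.posSemidef.sq_dotProduct_mulVec_le u (S⁻¹ *ᵥ m)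
  rw [hS.mulVec_inv_mulVec, dotProduct_comm u, dotProduct_comm _ m] at h
  exact div_le_of_le_mul₀ (by simpa using hS.inv.posSemidef.dotProduct_mulVec_nonneg m)
    (by simpa using hS.posSemidef.dotProduct_mulVec_nonneg u) h

lemma PosDef.inv_add_vecMulVec_self_mulVec (hS : S.PosDef) (m : ι → ℝ) :
    (S + vecMulVec m m)⁻¹ *ᵥ m = (1 + m ⬝ᵥ S⁻¹ *ᵥ m)⁻¹ • S⁻¹ *ᵥ m := by
  have hA : (S + vecMulVec m m).PosDef :=
    hS.add_posSemidef (by simpa using posSemidef_vecMulVec_self_star m)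
  have hα : 0 < 1 + m ⬝ᵥ S⁻¹ *ᵥ m := by
    have := hS.inv.posSemidef.dotProduct_mulVec_nonneg m
    rw [star_trivial] at this
    linarith
  let := hA.isUnit.invertible
  refine inv_mulVec_eq_vec ?_
  have hsum : m + (m ⬝ᵥ S⁻¹ *ᵥ m) • m = (1 + m ⬝ᵥ S⁻¹ *ᵥ m) • m := by rw [add_smul, one_smul]
  rw [mulVec_smul, add_mulVec, hS.mulVec_inv_mulVec, vecMulVec_mulVec, op_smul_eq_smul, hsum,
    inv_smul_smul₀ hα.ne']

end Matrix

section RandomVector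

variable {Ω ι : Type*} [Fintype ι] {mΩ : MeasurableSpace Ω} {μ : Measure Ω} {b : Ω → ι → ℝ}

lemma integral_dotProduct (hb : ∀ i, Integrable (fun ω => b ω i) μ) (u : ι → ℝ) :
    ∫ ω, b ω ⬝ᵥ u ∂μ = (fun i => ∫ ω, b ω i ∂μ) ⬝ᵥ u := by
  simp only [dotProduct]
  rw [integral_finsetSum _ fun i _ => (hb i).mul_const _]
  simp_rw [integral_mul_const]

lemma integral_const_add_dotProduct [IsProbabilityMeasure μ]
    (hb : ∀ i, Integrable (fun ω => b ω i) μ) (c : ℝ) (u : ι → ℝ) :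
    ∫ ω, (c + b ω ⬝ᵥ u) ∂μ = c + (fun i => ∫ ω, b ω i ∂μ) ⬝ᵥ u := by
  have hint : Integrable (fun ω => b ω ⬝ᵥ u) μ :=
    integrable_finsetSum _ fun i _ => (hb i).mul_const _
  rw [integral_add (integrable_const c) hint, integral_dotProduct hb, integral_const,
    probReal_univ, one_smul]

lemma variance_dotProduct [IsFiniteMeasure μ] (hb : ∀ i, MemLp (fun ω => b ω i) 2 μ)
    (u : ι → ℝ) :
    Var[fun ω => b ω ⬝ᵥ u; μ] =
      u ⬝ᵥ (Matrix.of fun i j => cov[fun ω => b ω i, fun ω => b ω j; μ]) *ᵥ u := by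
  simp only [dotProduct]
  rw [variance_fun_sum fun i => (hb i).mul_const (u i)]
  simp only [covariance_mul_const_right, covariance_mul_const_left, mulVec, dotProduct, of_apply,
    Finset.mul_sum]
  exact Finset.sum_congr rfl fun i _ => Finset.sum_congr rfl fun j _ => by ring

end RandomVector

theorem stmt_8_general {n : ℕ} {Ω : Type*} [MeasureSpace Ω]
    [IsProbabilityMeasure (ℙ : Measure Ω)]
    (b : Ω → Fin n → ℝ) (hb_meas : Measurable b)
    (hb_int : Integrable (fun ω => ‖b ω‖ ^ 2))
    (m : Fin n → ℝ) (hm : m = fun i => ∫ ω, b ω i)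
    (S : Matrix (Fin n) (Fin n) ℝ)
    (hS : S = Matrix.of fun i j => (∫ ω, b ω i * b ω j) - m i * m j)
    (hSpd : S.PosDef) (hm0 : m ≠ 0)
    (a x0 d : ℝ) (ha : 0 < a)
    (h : ℝ) (hh : h = a ^ 2 * (1 - m ⬝ᵥ (S + Matrix.vecMulVec m m)⁻¹.mulVec m)) :
    (0 < h ∧ h < a ^ 2) ∧
    (∫ ω, (a * x0 + b ω ⬝ᵥ (((d - a * x0) / (m ⬝ᵥ S⁻¹.mulVec m)) • S⁻¹.mulVec m)))
      = d ∧
    variance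
      (fun ω => a * x0 + b ω ⬝ᵥ (((d - a * x0) / (m ⬝ᵥ S⁻¹.mulVec m)) • S⁻¹.mulVec m)) ℙ
      = h * (d - a * x0) ^ 2 / (a ^ 2 - h) ∧
    ∀ u : Fin n → ℝ, (∫ ω, (a * x0 + b ω ⬝ᵥ u)) = d →
      h * (d - a * x0) ^ 2 / (a ^ 2 - h) ≤ variance (fun ω => a * x0 + b ω ⬝ᵥ u) ℙ := by
  have hb2 : ∀ i, MemLp (fun ω => b ω i) 2 :=
    ((memLp_two_iff_integrable_sq_norm hb_meas.aestronglyMeasurable).2 hb_int).eval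
  have hmean (u : Fin n → ℝ) : ∫ ω, (a * x0 + b ω ⬝ᵥ u) = a * x0 + m ⬝ᵥ u := by
    rw [integral_const_add_dotProduct fun i => (hb2 i).integrable one_le_two, hm]
  have hcov : S = Matrix.of fun i j => cov[fun ω => b ω i, fun ω => b ω j] := by
    ext i j
    rw [hS, of_apply, of_apply, covariance_eq_sub (hb2 i) (hb2 j), hm]
    rfl
  have hvar (u : Fin n → ℝ) : Var[fun ω => a * x0 + b ω ⬝ᵥ u] = u ⬝ᵥ S *ᵥ u := by
    rw [variance_const_add (by fun_prop), variance_dotProduct hb2, hcov]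
  set α := m ⬝ᵥ S⁻¹ *ᵥ m with hα_def
  have hα : 0 < α := by simpa using hSpd.inv.dotProduct_mulVec_pos hm0
  have hh' : h = a ^ 2 / (1 + α) := by
    rw [hh, hSpd.inv_add_vecMulVec_self_mulVec, dotProduct_smul, smul_eq_mul, ← hα_def]
    field_simp
    ring
  have hpos : 0 < h := by rw [hh']; positivity
  have hgap : a ^ 2 - h = α * h := by rw [hh']; field_simp; ring
  have hfrontier : h * (d - a * x0) ^ 2 / (a ^ 2 - h) = (d - a * x0) ^ 2 / α := by
    rw [hgap]; field_simp
  rw [hfrontier]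
  refine ⟨⟨hpos, by linarith [mul_pos hα hpos]⟩, ?_, ?_, fun u hu => ?_⟩
  · rw [hmean, dotProduct_smul, smul_eq_mul, div_mul_cancel₀ _ hα.ne']
    ring
  · rw [hvar, mulVec_smul, hSpd.mulVec_inv_mulVec, smul_dotProduct, dotProduct_smul,
      dotProduct_comm, ← hα_def, smul_eq_mul, smul_eq_mul]
    field_simp
  · have hmu : m ⬝ᵥ u = d - a * x0 := by linarith [hmean u]
    rw [hvar, ← hmu]
    exact hSpd.sq_dotProduct_div_le m u

/-- Single-period case of the mean-variance efficient frontier of Theorem 2: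
with `m = E[b]`, `Σ = E[b bᵀ] - m mᵀ` positive definite, `m ≠ 0`, `a > 0`,
`d ≥ a x₀`, and `h = a² (1 - mᵀ (Σ + m mᵀ)⁻¹ m)`, we have `0 < h < a²`, and the
minimum of `Var(a x₀ + bᵀ u)` over all `u` with `E[a x₀ + bᵀ u] = d` equals
`h (d - a x₀)² / (a² - h)`, attained at `u⋆ = Σ⁻¹ m (d - a x₀) / (mᵀ Σ⁻¹ m)`. -/
theorem stmt_8 {n : ℕ} {Ω : Type*} [MeasureSpace Ω]
    [IsProbabilityMeasure (ℙ : Measure Ω)]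
    (b : Ω → Fin n → ℝ) (hb_meas : Measurable b)
    (hb_int : Integrable (fun ω => ‖b ω‖ ^ 2))
    (m : Fin n → ℝ) (hm : m = fun i => ∫ ω, b ω i)
    (S : Matrix (Fin n) (Fin n) ℝ)
    (hS : S = Matrix.of fun i j => (∫ ω, b ω i * b ω j) - m i * m j)
    (hSpd : S.PosDef) (hm0 : m ≠ 0)
    (a x0 d : ℝ) (ha : 0 < a) (hd : a * x0 ≤ d)
    (h : ℝ) (hh : h = a ^ 2 * (1 - m ⬝ᵥ (S + Matrix.vecMulVec m m)⁻¹.mulVec m)) :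
    (0 < h ∧ h < a ^ 2) ∧
    (∫ ω, (a * x0 + b ω ⬝ᵥ (((d - a * x0) / (m ⬝ᵥ S⁻¹.mulVec m)) • S⁻¹.mulVec m)))
      = d ∧
    variance
      (fun ω => a * x0 + b ω ⬝ᵥ (((d - a * x0) / (m ⬝ᵥ S⁻¹.mulVec m)) • S⁻¹.mulVec m)) ℙ
      = h * (d - a * x0) ^ 2 / (a ^ 2 - h) ∧
    ∀ u : Fin n → ℝ, (∫ ω, (a * x0 + b ω ⬝ᵥ u)) = d →
      h * (d - a * x0) ^ 2 / (a ^ 2 - h) ≤ variance (fun ω => a * x0 + b ω ⬝ᵥ u) ℙ :=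
  stmt_8_general b hb_meas hb_int m hm S hS hSpd hm0 a x0 d ha h hh
end
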